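/- There is a universal constant C > 0 with the following property. Let Λ ∈ ℝ^{d×d} be symmetric positive definite with eigenvalues λ₁ ≥ ⋯ ≥ λ_d > 0 and orthonormal eigenvectors v₁, …, v_d, let θ̂ be a unit vector with coordinates ν_i = ⟨v_i, θ̂⟩, let β > 0, and let a = (θ̂ + β Λ^{−1/2} w⋆)/‖θ̂ + β Λ^{−1/2} w⋆‖₂ where w⋆ maximizes w ↦ ‖θ̂ + β Λ^{−1/2} w‖₂ over the unit sphere. Write a = α θ̂ + ξ with ⟨ξ, θ̂⟩ = 0 and a = Σ_i κ_i v_i with κ_i = ⟨v_i, a⟩. If ‖v₁ − θ̂‖₂ ≤ h, then: ν₁ ≥ 1 − h² and |ν_i| ≤ h for all i ≥ 2; α ≥ 1 − C β²/λ_d and ‖ξ‖₂ ≤ C β/√λ_d; and κ₁ ≥ 1 − C(h² + β²/λ_d) while |κ_i| ≤ C(h + β/√λ_d) for all i ≥ 2. -/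

import Mathlib

open Matrix

noncomputable section

/-- Euclidean norm of a vector in `ℝ^d`. -/
def vnorm {d : ℕ} (x : Fin d → ℝ) : ℝ := Real.sqrt (x ⬝ᵥ x)

/-- Projection onto the unit sphere, `x ↦ x / ‖x‖₂`. -/
def sphProj {d : ℕ} (x : Fin d → ℝ) : Fin d → ℝ := (vnorm x)⁻¹ • x

/-- The positive semidefinite square root of a positive semidefinite matrix, as defined in the
older Mathlib (`Matrix.PosSemidef.sqrt`, since removed). -/
def posSemidefSqrt {n : Type*} [Fintype n] [DecidableEq n] {A : Matrix n n ℝ}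
    (hA : A.PosSemidef) : Matrix n n ℝ :=
  (hA.1.eigenvectorUnitary : Matrix n n ℝ) * diagonal ((↑) ∘ (Real.sqrt ·) ∘ hA.1.eigenvalues) *
    (star (hA.1.eigenvectorUnitary : Matrix n n ℝ))

/-- `Λ^{-1/2}`: the inverse of the positive definite square root of `Λ`. -/
def invSqrt {d : ℕ} {M : Matrix (Fin d) (Fin d) ℝ} (hM : M.PosDef) :
    Matrix (Fin d) (Fin d) ℝ := (posSemidefSqrt hM.posSemidef)⁻¹

/-!
Write `t = β Λ^{-1/2} w⋆` and `ε = β / √λ_d`. Since `Λ ≥ λ_d` on the orthonormal eigenbasis,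
`‖Λ^{-1/2} w‖ ≤ 1 / √λ_d` for unit `w`, so `‖t‖ ≤ ε`. Normalising a vector at most doubles its
distance to a unit vector, hence `‖a - θ̂‖ ≤ 2ε`; comparing `w⋆` with `-w⋆` gives
`‖θ̂ + t‖ ≥ 1`, so `a` is a unit vector. Every bound then follows, with `C = 4`, from
`⟨x, y⟩ ≥ 1 - δ² / 2` for unit vectors with `‖x - y‖ ≤ δ`, and from
`|⟨vᵢ, x⟩| = |⟨vᵢ, x - v₁⟩| ≤ ‖x - v₁‖` for `i ≠ 1`.
-/

open scoped RealInnerProductSpace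

section Geometry

variable {V : Type*} [NormedAddCommGroup V] [NormedSpace ℝ V]

open NormedSpace in
theorem NormedSpace.norm_normalize_sub_le {θ : V} (hθ : ‖θ‖ = 1) (x : V) :
    ‖normalize x - θ‖ ≤ 2 * ‖x - θ‖ := by
  rcases eq_or_ne x 0 with rfl | hx
  · simp [hθ]
  have hradial : ‖normalize x - x‖ = |‖θ‖ - ‖x‖| := by
    have : normalize x - x = (‖x‖⁻¹ - 1) • x := by rw [normalize, sub_smul, one_smul]
    rw [this, norm_smul, Real.norm_eq_abs, hθ, ← abs_norm x, ← abs_mul, abs_norm, sub_mul,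
      inv_mul_cancel₀ (norm_ne_zero_iff.2 hx), one_mul]
  calc ‖normalize x - θ‖ ≤ ‖normalize x - x‖ + ‖x - θ‖ := norm_sub_le_norm_sub_add_norm_sub _ _ _
    _ ≤ ‖x - θ‖ + ‖x - θ‖ := by
        rw [hradial, norm_sub_rev x]; gcongr; exact abs_norm_sub_norm_le θ x
    _ = 2 * ‖x - θ‖ := by ring

theorem one_le_norm_add_of_norm_sub_le {θ t : V} (hθ : ‖θ‖ = 1) (h : ‖θ - t‖ ≤ ‖θ + t‖) :
    1 ≤ ‖θ + t‖ := by
  have : 2 ≤ ‖θ + t‖ + ‖θ - t‖ := by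
    calc (2 : ℝ) = ‖(θ + t) + (θ - t)‖ := by
          rw [add_add_sub_cancel, ← two_smul ℝ, norm_smul, hθ]; norm_num
      _ ≤ ‖θ + t‖ + ‖θ - t‖ := norm_add_le _ _
  linarith

end Geometry

section InnerProduct

variable {E : Type*} [NormedAddCommGroup E] [InnerProductSpace ℝ E]

theorem one_sub_sq_div_two_le_inner {x y : E} (hx : ‖x‖ = 1) (hy : ‖y‖ = 1) {δ : ℝ}
    (hxy : ‖x - y‖ ≤ δ) : 1 - δ ^ 2 / 2 ≤ ⟪x, y⟫ := by
  have hsq : ‖x - y‖ ^ 2 = 2 - 2 * ⟪x, y⟫ := by rw [norm_sub_sq_real, hx, hy]; ring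
  nlinarith [pow_le_pow_left₀ (norm_nonneg _) hxy 2]

theorem norm_sub_inner_smul_le_norm_sub {θ : E} (hθ : ‖θ‖ = 1) (a : E) :
    ‖a - ⟪a, θ⟫ • θ‖ ≤ ‖a - θ‖ := by
  -- `‖a - θ‖² = ‖a - ⟪a, θ⟫ • θ‖² + (1 - ⟪a, θ⟫)²`
  refine pow_le_pow_iff_left₀ (norm_nonneg _) (norm_nonneg _) two_ne_zero |>.1 ?_
  rw [norm_sub_sq_real, norm_sub_sq_real, real_inner_smul_right, norm_smul, Real.norm_eq_abs, hθ]
  nlinarith [sq_abs ⟪a, θ⟫, sq_nonneg (1 - ⟪a, θ⟫)]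

theorem abs_inner_le_norm_sub_of_inner_eq_zero {u e : E} (hu : ‖u‖ = 1) (hue : ⟪u, e⟫ = 0)
    (x : E) : |⟪u, x⟫| ≤ ‖x - e‖ := by
  calc |⟪u, x⟫| = |⟪u, x - e⟫| := by rw [inner_sub_right, hue, sub_zero]
    _ ≤ ‖u‖ * ‖x - e‖ := abs_real_inner_le_norm _ _
    _ = ‖x - e‖ := by rw [hu, one_mul]

theorem spectral_bounds_of_norm_sub_le {ι : Type*} {e : ι → E} (he : Orthonormal ℝ e) (i₀ : ι)
    {θ a : E} (hθ : ‖θ‖ = 1) (ha : ‖a‖ = 1) {h ε : ℝ} (hθe : ‖e i₀ - θ‖ ≤ h)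
    (haθ : ‖a - θ‖ ≤ 2 * ε) :
    1 - h ^ 2 ≤ ⟪e i₀, θ⟫ ∧ (∀ i, i ≠ i₀ → |⟪e i, θ⟫| ≤ h) ∧
      1 - 4 * ε ^ 2 ≤ ⟪a, θ⟫ ∧ ‖a - ⟪a, θ⟫ • θ‖ ≤ 4 * ε ∧
      1 - 4 * (h ^ 2 + ε ^ 2) ≤ ⟪e i₀, a⟫ ∧ (∀ i, i ≠ i₀ → |⟪e i, a⟫| ≤ 4 * (h + ε)) := by
  have hh : 0 ≤ h := (norm_nonneg _).trans hθe
  have hε : 0 ≤ ε := by linarith [norm_nonneg (a - θ)]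
  have hae : ‖a - e i₀‖ ≤ h + 2 * ε := by
    calc ‖a - e i₀‖ ≤ ‖a - θ‖ + ‖θ - e i₀‖ := norm_sub_le_norm_sub_add_norm_sub _ _ _
      _ ≤ 2 * ε + h := by rw [norm_sub_rev θ]; gcongr
      _ = h + 2 * ε := add_comm _ _
  have hcoord : ∀ x, ∀ i, i ≠ i₀ → |⟪e i, x⟫| ≤ ‖x - e i₀‖ := fun x i hi =>
    abs_inner_le_norm_sub_of_inner_eq_zero (he.1 i) (he.2 hi) x
  refine ⟨?_, fun i hi => ?_, ?_, ?_, ?_, fun i hi => ?_⟩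
  · nlinarith [one_sub_sq_div_two_le_inner (he.1 i₀) hθ hθe]
  · exact (hcoord θ i hi).trans (by rwa [norm_sub_rev])
  · nlinarith [one_sub_sq_div_two_le_inner ha hθ haθ]
  · linarith [norm_sub_inner_smul_le_norm_sub hθ a]
  · rw [← norm_sub_rev] at hae
    nlinarith [one_sub_sq_div_two_le_inner (he.1 i₀) ha hae, sq_nonneg (h - 2 * ε)]
  · linarith [hcoord a i hi]

end InnerProduct

section MatrixBounds

variable {n : Type*} [Fintype n]

theorem Matrix.PosDef.pos_of_mulVec_eq_smul {A : Matrix n n ℝ} (hA : A.PosDef) {x : n → ℝ}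
    (hx : x ≠ 0) {r : ℝ} (hr : A *ᵥ x = r • x) : 0 < r := by
  have hquad := hA.dotProduct_mulVec_pos hx
  rw [hr, star_trivial, dotProduct_smul, smul_eq_mul] at hquad
  exact pos_of_mul_pos_left hquad (dotProduct_self_star_nonneg x)

variable [DecidableEq n]

theorem Matrix.transpose_posSemidefSqrt {A : Matrix n n ℝ} (hA : A.PosSemidef) :
    (posSemidefSqrt hA)ᵀ = posSemidefSqrt hA := by
  simp [posSemidefSqrt, transpose_mul, star_eq_conjTranspose, mul_assoc]

theorem Matrix.posSemidefSqrt_mul_self {A : Matrix n n ℝ} (hA : A.PosSemidef) :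
    posSemidefSqrt hA * posSemidefSqrt hA = A := by
  set U : Matrix n n ℝ := (hA.1.eigenvectorUnitary : Matrix n n ℝ)
  set D : Matrix n n ℝ := diagonal ((↑) ∘ (Real.sqrt ·) ∘ hA.1.eigenvalues)
  have hU : star U * U = 1 := Unitary.coe_star_mul_self _
  have hD : D * D = diagonal (RCLike.ofReal ∘ hA.1.eigenvalues) := by
    simp [D, diagonal_mul_diagonal, Real.mul_self_sqrt (hA.eigenvalues_nonneg _)]
  calc posSemidefSqrt hA * posSemidefSqrt hA = U * D * (star U * U) * D * star U := by
        simp only [posSemidefSqrt, U, D, mul_assoc]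
    _ = U * diagonal (RCLike.ofReal ∘ hA.1.eigenvalues) * star U := by
        rw [hU, mul_one, mul_assoc U D D, hD]
    _ = A := (hA.1.spectral_theorem.trans (Unitary.conjStarAlgAut_apply _ _)).symm

theorem Matrix.mul_dotProduct_self_le_dotProduct_mulVec {A : Matrix n n ℝ} {lam : n → ℝ}
    {v : n → n → ℝ} (heig : ∀ i, A *ᵥ v i = lam i • v i)
    (horth : ∀ i j, v i ⬝ᵥ v j = if i = j then 1 else 0) {c : ℝ} (hc : ∀ i, c ≤ lam i)
    (x : n → ℝ) : c * (x ⬝ᵥ x) ≤ x ⬝ᵥ A *ᵥ x := by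
  set V : Matrix n n ℝ := of v
  have hVVt : V * Vᵀ = 1 := by
    ext i j
    simpa [V, mul_apply, one_apply, dotProduct] using horth i j
  have hVtV : Vᵀ * V = 1 := mul_eq_one_comm.mp hVVt
  have hA : A = Vᵀ * diagonal lam * V := by
    have hAVt : A * Vᵀ = Vᵀ * diagonal lam := by
      ext i j
      have := congrFun (heig j) i
      simp only [mulVec, dotProduct, Pi.smul_apply, smul_eq_mul] at this
      rw [mul_diagonal, mul_apply]
      simp only [transpose_apply, V, of_apply, this, mul_comm]
    rw [← hAVt, mul_assoc, hVtV, mul_one]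
  have hxx : x ⬝ᵥ x = (V *ᵥ x) ⬝ᵥ (V *ᵥ x) := by
    rw [dotProduct_mulVec, ← mulVec_transpose, mulVec_mulVec, hVtV, one_mulVec]
  have hxAx : x ⬝ᵥ A *ᵥ x = ∑ i, lam i * ((V *ᵥ x) i * (V *ᵥ x) i) := by
    rw [hA, ← mulVec_mulVec, ← mulVec_mulVec, dotProduct_mulVec, vecMul_transpose, dotProduct]
    simp only [mulVec_diagonal]
    exact Finset.sum_congr rfl fun i _ => by ring
  rw [hxx, hxAx, dotProduct, Finset.mul_sum]
  exact Finset.sum_le_sum fun i _ => mul_le_mul_of_nonneg_right (hc i) (mul_self_nonneg _)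

end MatrixBounds

theorem Matrix.mul_dotProduct_invSqrt_mulVec_le {d : ℕ} {A : Matrix (Fin d) (Fin d) ℝ}
    (hA : A.PosDef) {c : ℝ} (hc : ∀ x, c * (x ⬝ᵥ x) ≤ x ⬝ᵥ A *ᵥ x) (w : Fin d → ℝ) :
    c * ((invSqrt hA *ᵥ w) ⬝ᵥ (invSqrt hA *ᵥ w)) ≤ w ⬝ᵥ w := by
  set S := posSemidefSqrt hA.posSemidef
  have hSS : S * S = A := posSemidefSqrt_mul_self hA.posSemidef
  have hS : IsUnit S.det := isUnit_iff_ne_zero.2 fun h0 =>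
    hA.det_pos.ne' (by rw [← hSS, det_mul, h0, zero_mul])
  have hSm : S *ᵥ (invSqrt hA *ᵥ w) = w := by
    rw [invSqrt, mulVec_mulVec, mul_nonsing_inv S hS, one_mulVec]
  generalize invSqrt hA *ᵥ w = m at hSm ⊢
  calc c * (m ⬝ᵥ m) ≤ m ⬝ᵥ A *ᵥ m := hc m
    _ = (S *ᵥ m) ⬝ᵥ (S *ᵥ m) := by
        rw [← hSS, ← mulVec_mulVec, dotProduct_mulVec, ← mulVec_transpose,
          transpose_posSemidefSqrt]
    _ = w ⬝ᵥ w := by rw [hSm]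

theorem vnorm_invSqrt_mulVec_le {d : ℕ} {A : Matrix (Fin d) (Fin d) ℝ} (hA : A.PosDef) {c : ℝ}
    (hc0 : 0 < c) (hc : ∀ x, c * (x ⬝ᵥ x) ≤ x ⬝ᵥ A *ᵥ x) (w : Fin d → ℝ) :
    vnorm (invSqrt hA *ᵥ w) ≤ vnorm w / Real.sqrt c := by
  rw [vnorm, vnorm, ← Real.sqrt_div' _ hc0.le]
  exact Real.sqrt_le_sqrt <| (le_div_iff₀' hc0).2 <| mul_dotProduct_invSqrt_mulVec_le hA hc w

theorem vnorm_eq_norm {d : ℕ} (x : Fin d → ℝ) : vnorm x = ‖WithLp.toLp 2 x‖ := by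
  rw [norm_eq_sqrt_real_inner, EuclideanSpace.inner_toLp_toLp, star_trivial]; rfl

theorem dotProduct_eq_inner {d : ℕ} (x y : Fin d → ℝ) :
    x ⬝ᵥ y = ⟪WithLp.toLp 2 x, WithLp.toLp 2 y⟫ := by
  rw [EuclideanSpace.inner_toLp_toLp, star_trivial, dotProduct_comm]

theorem toLp_sphProj {d : ℕ} (x : Fin d → ℝ) :
    WithLp.toLp 2 (sphProj x) = NormedSpace.normalize (WithLp.toLp 2 x) := by
  rw [sphProj, WithLp.toLp_smul, vnorm_eq_norm]; rfl

/-- **Lemma (spectral decomposition of the LinUCB action).**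
With `a = P(θ̂ + β Λ^{-1/2} w⋆)`, `a = α θ̂ + ξ` the orthogonal decomposition along `θ̂`,
and `κ_i = ⟨v_i, a⟩`: if `‖v₁ − θ̂‖₂ ≤ h`, then `ν₁ ≥ 1 − h²`, `|ν_i| ≤ h` (`i ≥ 2`),
`α ≥ 1 − Cβ²/λ_d`, `‖ξ‖₂ ≤ Cβ/√λ_d`, `κ₁ ≥ 1 − C(h² + β²/λ_d)` and
`|κ_i| ≤ C(h + β/√λ_d)` (`i ≥ 2`), for a universal constant `C`. -/
theorem spectral_decomposition_of_action :
    ∃ C : ℝ, 0 < C ∧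
      ∀ (d : ℕ) (hd : 1 ≤ d)
        (Lmat : Matrix (Fin d) (Fin d) ℝ) (hL : Lmat.PosDef)
        (lam : Fin d → ℝ) (v : Fin d → Fin d → ℝ),
        (∀ i, Lmat.mulVec (v i) = lam i • v i) →
        (∀ i j, v i ⬝ᵥ v j = if i = j then 1 else 0) →
        (∀ i j, i ≤ j → lam j ≤ lam i) →
      ∀ (θhat : Fin d → ℝ), vnorm θhat = 1 →
      ∀ (β : ℝ), 0 < β →
      ∀ (wstar : Fin d → ℝ), vnorm wstar = 1 →
        (∀ w : Fin d → ℝ, vnorm w = 1 →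
          vnorm (θhat + β • (invSqrt hL).mulVec w) ≤
            vnorm (θhat + β • (invSqrt hL).mulVec wstar)) →
      ∀ h : ℝ, vnorm (v ⟨0, by omega⟩ - θhat) ≤ h →
        (1 - h^2 ≤ v ⟨0, by omega⟩ ⬝ᵥ θhat) ∧
        (∀ i : Fin d, i ≠ ⟨0, by omega⟩ → |v i ⬝ᵥ θhat| ≤ h) ∧
        (1 - C * β^2 / lam ⟨d - 1, by omega⟩ ≤
          sphProj (θhat + β • (invSqrt hL).mulVec wstar) ⬝ᵥ θhat) ∧
        (vnorm (sphProj (θhat + β • (invSqrt hL).mulVec wstar) -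
            (sphProj (θhat + β • (invSqrt hL).mulVec wstar) ⬝ᵥ θhat) • θhat) ≤
          C * β / Real.sqrt (lam ⟨d - 1, by omega⟩)) ∧
        (1 - C * (h^2 + β^2 / lam ⟨d - 1, by omega⟩) ≤
          v ⟨0, by omega⟩ ⬝ᵥ sphProj (θhat + β • (invSqrt hL).mulVec wstar)) ∧
        (∀ i : Fin d, i ≠ ⟨0, by omega⟩ →
          |v i ⬝ᵥ sphProj (θhat + β • (invSqrt hL).mulVec wstar)| ≤
            C * (h + β / Real.sqrt (lam ⟨d - 1, by omega⟩))) := by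
  refine ⟨4, by norm_num, ?_⟩
  intro d hd A hA lam v heig horth hanti θ hθ β hβ w hw hmax h hh
  set iₗ : Fin d := ⟨d - 1, by omega⟩
  set lmin := lam iₗ
  have hmin : ∀ i, lmin ≤ lam i := fun i => hanti i _ (Fin.mk_le_mk.2 (by omega))
  have hlmin : 0 < lmin :=
    hA.pos_of_mulVec_eq_smul (fun h0 => by simpa [h0] using horth iₗ iₗ) (heig _)
  have ht : vnorm (β • invSqrt hA *ᵥ w) ≤ β / Real.sqrt lmin := by
    rw [vnorm_eq_norm, WithLp.toLp_smul, norm_smul, Real.norm_of_nonneg hβ.le, ← vnorm_eq_norm,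
      div_eq_mul_one_div]
    gcongr
    simpa [hw] using vnorm_invSqrt_mulVec_le hA hlmin
      (mul_dotProduct_self_le_dotProduct_mulVec heig horth hmin) w
  have hmax' := hmax (-w) (by rwa [vnorm_eq_norm, WithLp.toLp_neg, norm_neg, ← vnorm_eq_norm])
  rw [mulVec_neg, smul_neg, ← sub_eq_add_neg] at hmax'
  have hε : β ^ 2 / lmin = (β / Real.sqrt lmin) ^ 2 := by rw [div_pow, Real.sq_sqrt hlmin.le]
  simp only [vnorm_eq_norm, dotProduct_eq_inner, toLp_sphProj, WithLp.toLp_sub, WithLp.toLp_smul,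
    WithLp.toLp_add, mul_div_assoc, hε] at hθ hh ht hmax' ⊢
  have hX := one_le_norm_add_of_norm_sub_le hθ hmax'
  refine spectral_bounds_of_norm_sub_le (e := fun i => WithLp.toLp 2 (v i))
    (orthonormal_iff_ite.2 fun i j => by rw [← dotProduct_eq_inner, horth]) _ hθ
    (NormedSpace.norm_normalize_eq_one_iff.2 (norm_pos_iff.1 (one_pos.trans_le hX))) hh ?_
  calc _ ≤ 2 * ‖(WithLp.toLp 2 θ + β • WithLp.toLp 2 (invSqrt hA *ᵥ w)) - WithLp.toLp 2 θ‖ :=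
        NormedSpace.norm_normalize_sub_le hθ _
    _ ≤ 2 * (β / Real.sqrt lmin) := by rw [add_sub_cancel_left]; gcongr

end
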